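/- arXiv:0810.1130 — 2 statements merged into one kernel-verified Lean document; each statement's English description precedes it below -/
import Mathlib

section
/- Let G be a connected multigraph on vertex set [n] = {1,…,n}, let 1 ≤ m ≤ n, and let k ≥ 1. Then the number of (G,m)-multiparking functions f having exactly k roots (i.e. exactly k vertices v with f(v) = −1) equals Σ_F ∏_{{i,j} ∈ F} μ(i,j), where the sum runs over all spanning m-forests F of G having exactly k connected components. -/
open scoped Classical

/-- Out-degree of vertex `i` with respect to a vertex subset `I`:
the number of edges from `i` to vertices outside `I`. -/
def outdeg {n : ℕ} (μ : Fin n → Fin n → ℕ) (I : Finset (Fin n)) (i : Fin n) : ℕ :=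
  ∑ j ∈ Iᶜ, μ i j

/-- A `(G,m)`-multiparking function for the multigraph `G` given by the multiplicity
function `μ`. -/
def IsMultiparking {n : ℕ} (μ : Fin n → Fin n → ℕ) (m : Fin n) (f : Fin n → ℤ) : Prop :=
  (∀ i, -1 ≤ f i) ∧
  ∀ I : Finset (Fin n), I.Nonempty →
    (∃ a ∈ I, m ≤ a ∧ (∀ b ∈ I, m ≤ b → a ≤ b) ∧ f a = -1) ∨
    (∃ i ∈ I, 0 ≤ f i ∧ f i < (outdeg μ I i : ℤ))

/-- The simple support graph of the multigraph `μ`. -/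
def supportGraph {n : ℕ} (μ : Fin n → Fin n → ℕ) : SimpleGraph (Fin n) where
  Adj i j := i ≠ j ∧ 1 ≤ μ i j ∧ 1 ≤ μ j i
  symm := ⟨fun i j h => ⟨h.1.symm, h.2.2, h.2.1⟩⟩
  loopless := ⟨fun i h => h.1 rfl⟩

/-- A spanning `m`-forest of the multigraph `μ`. -/
def IsSpanningMForest {n : ℕ} (μ : Fin n → Fin n → ℕ) (m : Fin n)
    (F : Finset (Sym2 (Fin n))) : Prop :=
  (∀ i j : Fin n, s(i, j) ∈ F → i ≠ j ∧ 1 ≤ μ i j) ∧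
  (SimpleGraph.fromEdgeSet (F : Set (Sym2 (Fin n)))).IsAcyclic ∧
  ∀ v : Fin n, ∃ w : Fin n,
    (SimpleGraph.fromEdgeSet (F : Set (Sym2 (Fin n)))).Reachable v w ∧ m ≤ w

/-!
Vertices are burnt one at a time. A multiparking function `f` burns, from the set `U` of unburnt
vertices, the least `v` with `0 ≤ f v < outdeg U v`, failing that the least `v ≥ m`; a forest `F`
burns the least `v ∈ U` with an `F`-neighbour outside `U`, failing that the least `v ≥ m`. The
multiparking condition says exactly that the first rule always burns a vertex satisfying (A) or (B).

When `v` is burnt, `outdeg U v` is the multiplicity of the edges from `v` to earlier vertices;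
listing these in burning order cuts `[0, outdeg U v)` into consecutive slots, of length `μ v j` for
each earlier `j`. A value `f v ≥ 0` lies in the slot of a unique earlier vertex, the parent of `v`,
at an offset `< μ v (parent v)`. The parent edges form a spanning `m`-forest whose roots are the
vertices with `f v = -1`, and burning this forest burns the vertices in the same order as `f`.
Conversely a spanning `m`-forest, together with an offset for each non-root vertex, defines a
multiparking function with the same burning order. So multiparking functions with `k` roots
correspond to spanning `m`-forests with `k` components together with offsets, and a forest `F`
carries `∏ e ∈ F, μ e` choices of offsets.
-/

open Finset

lemma Monotone.existsUnique_mem_Ico {P : ℕ → ℕ} (hP : Monotone P) {c T : ℕ} (h0 : P 0 ≤ c)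
    (hT : c < P T) : ∃! s, c ∈ Set.Ico (P s) (P (s + 1)) := by
  have hex : ∃ t, c < P t := ⟨T, hT⟩
  obtain ⟨s, hs⟩ : ∃ s, Nat.find hex = s + 1 :=
    Nat.exists_eq_succ_of_ne_zero fun h => by have := Nat.find_spec hex; rw [h] at this; omega
  have hle : ∀ a b, c ∈ Set.Ico (P a) (P (a + 1)) → c ∈ Set.Ico (P b) (P (b + 1)) → a ≤ b :=
    fun a b ha hb => by
      by_contra! hab
      have := hP (show b + 1 ≤ a by omega)
      exact absurd hb.2 (by have := ha.1; omega)
  have hs' : c ∈ Set.Ico (P s) (P (s + 1)) :=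
    ⟨not_lt.1 (Nat.find_min hex (by omega)), hs ▸ Nat.find_spec hex⟩
  exact ⟨s, hs', fun s' h => le_antisymm (hle _ _ h hs') (hle _ _ hs' h)⟩

namespace SimpleGraph

variable {V : Type*} {G : SimpleGraph V}

lemma Reachable.mem_of_adj_closed {s : Set V} (hs : ∀ x y, G.Adj x y → x ∈ s → y ∈ s)
    {u v : V} (h : G.Reachable u v) (hu : u ∈ s) : v ∈ s := by
  obtain ⟨p⟩ := h
  induction p with
  | nil => exact hu
  | cons hadj _ ih => exact ih (hs _ _ hadj hu)

variable (G) (h : V → ℕ)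

def IsRoot (v : V) : Prop := ¬∃ w, G.Adj v w ∧ h w < h v

noncomputable def parent (v : V) : V :=
  if hv : ∃ w, G.Adj v w ∧ h w < h v then hv.choose else v

variable {G h}

lemma adj_parent {v : V} (hv : ¬G.IsRoot h v) : G.Adj v (G.parent h v) := by
  rw [IsRoot, not_not] at hv
  rw [parent, dif_pos hv]
  exact hv.choose_spec.1

lemma parent_lt {v : V} (hv : ¬G.IsRoot h v) : h (G.parent h v) < h v := by
  rw [IsRoot, not_not] at hv
  rw [parent, dif_pos hv]
  exact hv.choose_spec.2

lemma not_isRoot_of_adj {v w : V} (hadj : G.Adj v w) (hlt : h w < h v) : ¬G.IsRoot h v :=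
  fun hv => hv ⟨w, hadj, hlt⟩

lemma injOn_parentEdge : Set.InjOn (fun v => s(v, G.parent h v)) {v | ¬G.IsRoot h v} := by
  intro v hv w hw he
  rcases Sym2.eq_iff.1 he with ⟨hvw, -⟩ | ⟨hvw, hwv⟩
  · exact hvw
  · have hv' := parent_lt hv
    have hw' := parent_lt hw
    rw [hwv] at hv'
    rw [← hvw] at hw'
    omega

lemma exists_walk_isRoot (v : V) :
    ∃ r, G.IsRoot h r ∧ ∃ p : G.Walk v r, ∀ x ∈ p.support, h x ≤ h v := by
  induction hv : h v using Nat.strong_induction_on generalizing v with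
  | _ t ih =>
    by_cases hroot : G.IsRoot h v
    · exact ⟨v, hroot, .nil, by simp [hv]⟩
    obtain ⟨r, hr, p, hp⟩ := ih _ (hv ▸ parent_lt hroot) _ rfl
    refine ⟨r, hr, .cons (adj_parent hroot) p, fun x hx => ?_⟩
    rcases List.mem_cons.1 (Walk.support_cons _ _ ▸ hx) with rfl | hx
    · exact hv.le
    · exact (hp x hx).trans (hv ▸ (parent_lt hroot).le)

lemma isAcyclic_of_lower_subsingleton (hinj : Function.Injective h)
    (hlow : ∀ v a b, G.Adj v a → G.Adj v b → h a < h v → h b < h v → a = b) : G.IsAcyclic := by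
  -- the highest vertex of a cycle has two lower neighbours on it
  intro v c hc
  obtain ⟨u, hu, hmax⟩ := c.support.toFinset.exists_max_image h ⟨v, by simp⟩
  rw [List.mem_toFinset] at hu
  set c' := c.rotate u hu
  have hc' : c'.IsCycle := hc.rotate hu
  have hsupp : ∀ x ∈ c'.support, h x ≤ h u := by
    intro x hx
    refine hmax x (List.mem_toFinset.2 ?_)
    rcases c'.mem_support_iff.1 hx with rfl | hx
    · exact hu
    · exact List.mem_of_mem_tail ((c.support_rotate u hu).mem_iff.1 hx)
  have hlower : ∀ x, G.Adj u x → x ∈ c'.support → h x < h u := fun x hadj hx =>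
    lt_of_le_of_ne (hsupp x hx) fun he => hadj.ne (hinj he).symm
  have hsnd := c'.adj_snd hc'.not_nil
  have hpen := (c'.adj_penultimate hc'.not_nil).symm
  exact hc'.snd_ne_penultimate <| hlow u _ _ hsnd hpen
    (hlower _ hsnd (c'.getVert_mem_support 1)) (hlower _ hpen (c'.getVert_mem_support _))

variable (G h) in
lemma card_connectedComponent_eq_card_isRoot [Fintype V]
    (hroots : ∀ r₁ r₂, G.IsRoot h r₁ → G.IsRoot h r₂ → G.Reachable r₁ r₂ → r₁ = r₂) :
    Nat.card G.ConnectedComponent = #{v | G.IsRoot h v} := by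
  rw [← Fintype.card_coe, ← Nat.card_eq_fintype_card]
  refine (Nat.card_congr (Equiv.ofBijective (fun r : {v // v ∈ ({v | G.IsRoot h v} : Finset V)} =>
    G.connectedComponentMk r.1) ⟨?_, ?_⟩)).symm
  · rintro ⟨r₁, h₁⟩ ⟨r₂, h₂⟩ he
    simp only [mem_filter, mem_univ, true_and] at h₁ h₂
    exact Subtype.ext (hroots r₁ r₂ h₁ h₂ (ConnectedComponent.eq.1 he))
  · refine ConnectedComponent.ind fun v => ?_
    obtain ⟨r, hr, p, -⟩ := exists_walk_isRoot (G := G) (h := h) v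
    exact ⟨⟨r, by simpa using hr⟩, ConnectedComponent.eq.2 ⟨p.reverse⟩⟩

lemma lower_subsingleton_of_isAcyclic (hG : G.IsAcyclic)
    (hroots : ∀ r₁ r₂, G.IsRoot h r₁ → G.IsRoot h r₂ → G.Reachable r₁ r₂ → r₁ = r₂)
    {v a b : V} (ha : G.Adj v a) (hb : G.Adj v b) (hav : h a < h v) (hbv : h b < h v) :
    a = b := by
  -- `a` and `b` descend to a common root below `v`, which closes a cycle through `v`
  obtain ⟨r, hr, p, hp⟩ := exists_walk_isRoot (G := G) (h := h) a
  obtain ⟨r', hr', q, hq⟩ := exists_walk_isRoot (G := G) (h := h) b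
  obtain rfl : r = r' := hroots r r' hr hr'
    ⟨p.reverse.append (((Walk.nil.cons hb).cons ha.symm).append q)⟩
  let path := (p.append q.reverse).toPath
  have hv : v ∉ (path : G.Walk a b).support := fun hv => by
    rcases (Walk.mem_support_append_iff _ _).1 (Walk.support_toPath_subset_support _ hv)
      with hv | hv
    · exact absurd (hp v hv) (by omega)
    · rw [Walk.support_reverse, List.mem_reverse] at hv
      exact absurd (hq v hv) (by omega)
  have := hG.eq_penultimate_of_adj_end (path.2.concat hv hb.symm) ha
    (Walk.start_mem_support _)
  rwa [Walk.penultimate_concat] at this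

end SimpleGraph

namespace Burning

section Sequence

variable {V : Type*} [Fintype V] [DecidableEq V]

abbrev Selector (V : Type*) := ∀ U : Finset V, U.Nonempty → U

variable (sel : Selector V)

def unburnt : ℕ → Finset V
  | 0 => univ
  | t + 1 => if h : (unburnt t).Nonempty then (unburnt t).erase (sel _ h) else ∅

lemma unburnt_succ {t : ℕ} (h : (unburnt sel t).Nonempty) :
    unburnt sel (t + 1) = (unburnt sel t).erase (sel _ h) := by
  rw [unburnt, dif_pos h]

lemma unburnt_succ_subset (t : ℕ) : unburnt sel (t + 1) ⊆ unburnt sel t := by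
  by_cases h : (unburnt sel t).Nonempty
  · rw [unburnt_succ sel h]; exact erase_subset _ _
  · rw [unburnt, dif_neg h]; exact empty_subset _

lemma antitone_unburnt : Antitone (unburnt sel) :=
  antitone_nat_of_succ_le (unburnt_succ_subset sel)

lemma card_unburnt (t : ℕ) : #(unburnt sel t) = Fintype.card V - t := by
  induction t with
  | zero => simp [unburnt]
  | succ t ih =>
    by_cases h : (unburnt sel t).Nonempty
    · rw [unburnt_succ sel h, card_erase_of_mem (sel _ h).2, ih]; omega
    · rw [not_nonempty_iff_eq_empty] at h
      rw [unburnt, dif_neg (by simp [h]), card_empty]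
      rw [h, card_empty] at ih
      omega

lemma unburnt_card_eq_empty : unburnt sel (Fintype.card V) = ∅ := by
  rw [← card_eq_zero, card_unburnt, Nat.sub_self]

lemma exists_notMem_unburnt_succ (v : V) : ∃ t, v ∉ unburnt sel (t + 1) :=
  ⟨Fintype.card V, fun hv => by
    simpa [unburnt_card_eq_empty] using antitone_unburnt sel (Nat.le_succ _) hv⟩

def burnTime (v : V) : ℕ := Nat.find (exists_notMem_unburnt_succ sel v)

lemma mem_unburnt_iff {v : V} {t : ℕ} : v ∈ unburnt sel t ↔ t ≤ burnTime sel v := by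
  constructor
  · intro hv
    by_contra! hlt
    exact Nat.find_spec (exists_notMem_unburnt_succ sel v) (antitone_unburnt sel hlt hv)
  · intro ht
    cases t with
    | zero => exact mem_univ v
    | succ t => exact not_not.mp (Nat.find_min (exists_notMem_unburnt_succ sel v) ht)

lemma notMem_unburnt_iff {v : V} {t : ℕ} : v ∉ unburnt sel t ↔ burnTime sel v < t := by
  rw [mem_unburnt_iff, not_le]

lemma mem_unburnt_burnTime (v : V) : v ∈ unburnt sel (burnTime sel v) :=
  (mem_unburnt_iff sel).2 le_rfl

lemma unburnt_burnTime_nonempty (v : V) : (unburnt sel (burnTime sel v)).Nonempty :=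
  ⟨v, mem_unburnt_burnTime sel v⟩

lemma burnTime_sel {t : ℕ} (h : (unburnt sel t).Nonempty) : burnTime sel (sel _ h) = t := by
  have hin := (mem_unburnt_iff sel).1 (sel _ h).2
  have hout : (sel _ h : V) ∉ unburnt sel (t + 1) := by
    rw [unburnt_succ sel h]; exact notMem_erase _ _
  rw [notMem_unburnt_iff] at hout
  omega

lemma sel_unburnt_burnTime (v : V) : (sel _ (unburnt_burnTime_nonempty sel v) : V) = v := by
  by_contra hne
  have hv : v ∈ unburnt sel (burnTime sel v + 1) := by
    rw [unburnt_succ sel (unburnt_burnTime_nonempty sel v)]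
    exact mem_erase.2 ⟨Ne.symm hne, mem_unburnt_burnTime sel v⟩
  rw [mem_unburnt_iff] at hv
  omega

lemma unburnt_burnTime_succ (v : V) :
    unburnt sel (burnTime sel v + 1) = (unburnt sel (burnTime sel v)).erase v := by
  rw [unburnt_succ sel (unburnt_burnTime_nonempty sel v), sel_unburnt_burnTime]

lemma burnTime_injective : Function.Injective (burnTime sel) := by
  intro v w h
  by_contra hne
  have hw : w ∈ unburnt sel (burnTime sel w + 1) := by
    rw [← h, unburnt_burnTime_succ]
    exact mem_erase.2 ⟨Ne.symm hne, h ▸ mem_unburnt_burnTime sel w⟩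
  rw [mem_unburnt_iff] at hw
  omega

lemma exists_burnTime_eq {t : ℕ} (ht : t < Fintype.card V) : ∃ v, burnTime sel v = t := by
  have h : (unburnt sel t).Nonempty := by
    rw [← card_pos, card_unburnt]; omega
  exact ⟨_, burnTime_sel sel h⟩

lemma unburnt_eq_of_agree {sel' : Selector V}
    (h : ∀ t (ht : (unburnt sel t).Nonempty), sel _ ht = sel' _ ht) :
    unburnt sel = unburnt sel' := by
  funext t
  induction t with
  | zero => rfl
  | succ t ih =>
    rw [unburnt, unburnt, ← ih]
    split_ifs with ht
    · rw [h t ht]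
    · rfl

lemma burnTime_eq_of_unburnt_eq {sel' : Selector V} (h : unburnt sel = unburnt sel') :
    burnTime sel = burnTime sel' := by
  funext v
  simp only [burnTime, h]

lemma sum_compl_unburnt_burnTime_succ (w : V → ℕ) (v : V) :
    ∑ j ∈ (unburnt sel (burnTime sel v + 1))ᶜ, w j =
      ∑ j ∈ (unburnt sel (burnTime sel v))ᶜ, w j + w v := by
  rw [unburnt_burnTime_succ, compl_erase, sum_insert (by simp [mem_unburnt_burnTime]), add_comm]

lemma monotone_sum_compl_unburnt (w : V → ℕ) :
    Monotone fun t => ∑ j ∈ (unburnt sel t)ᶜ, w j :=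
  fun _ _ hst => sum_le_sum_of_subset (compl_subset_compl.2 (antitone_unburnt sel hst))

lemma existsUnique_slot (w : V → ℕ) {c T : ℕ} (hc : c < ∑ j ∈ (unburnt sel T)ᶜ, w j) :
    ∃! j, c ∈ Set.Ico (∑ j' ∈ (unburnt sel (burnTime sel j))ᶜ, w j')
      (∑ j' ∈ (unburnt sel (burnTime sel j))ᶜ, w j' + w j) := by
  obtain ⟨s, hs, huniq⟩ := (monotone_sum_compl_unburnt sel w).existsUnique_mem_Ico
    (by simp [unburnt]) hc
  have hs_lt : s < Fintype.card V := by
    by_contra! h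
    have hempty : ∀ t, s ≤ t → unburnt sel t = ∅ := fun t ht => by
      rw [← card_eq_zero, card_unburnt]; omega
    simp only [hempty s le_rfl, hempty (s + 1) (by omega)] at hs
    exact absurd hs.2 (not_lt.2 hs.1)
  obtain ⟨v, rfl⟩ := exists_burnTime_eq sel hs_lt
  refine ⟨v, ?_, fun j hj => burnTime_injective sel (huniq _ ?_)⟩
  · rwa [sum_compl_unburnt_burnTime_succ] at hs
  · dsimp only at hj ⊢
    rwa [sum_compl_unburnt_burnTime_succ]

end Sequence

section Priority

variable {V : Type*} [LinearOrder V]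

noncomputable def prioritySelector (E : Finset V → V → Prop) (m : V) (U : Finset V)
    (hU : U.Nonempty) : U :=
  if hE : {x ∈ U | E U x}.Nonempty then ⟨_, mem_of_mem_filter _ (min'_mem _ hE)⟩
  else if hA : {x ∈ U | m ≤ x}.Nonempty then ⟨_, mem_of_mem_filter _ (min'_mem _ hA)⟩
  else ⟨U.min' hU, min'_mem _ _⟩

variable {E E' : Finset V → V → Prop} {m : V}

lemma prioritySelector_of_nonempty {U : Finset V} (hU : U.Nonempty)
    (hE : {x ∈ U | E U x}.Nonempty) :
    (prioritySelector E m U hU : V) = {x ∈ U | E U x}.min' hE := by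
  unfold prioritySelector; rw [dif_pos hE]

lemma prioritySelector_of_empty {U : Finset V} (hU : U.Nonempty)
    (hE : ¬{x ∈ U | E U x}.Nonempty) (hA : {x ∈ U | m ≤ x}.Nonempty) :
    (prioritySelector E m U hU : V) = {x ∈ U | m ≤ x}.min' hA := by
  unfold prioritySelector; rw [dif_neg hE, dif_pos hA]

variable [Fintype V]

lemma prioritySelector_eligible {v : V} {t : ℕ} (hv : burnTime (prioritySelector E m) v = t)
    (hE : ∃ x ∈ unburnt (prioritySelector E m) t, E (unburnt (prioritySelector E m) t) x) :
    E (unburnt (prioritySelector E m) t) v := by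
  subst hv
  set U := unburnt (prioritySelector E m) (burnTime (prioritySelector E m) v)
  have hE' : {x ∈ U | E U x}.Nonempty := by
    simpa [Finset.Nonempty] using hE
  have hsel := sel_unburnt_burnTime (prioritySelector E m) v
  rw [prioritySelector_of_nonempty (unburnt_burnTime_nonempty _ v) hE'] at hsel
  have hmem := (mem_filter.1 (min'_mem _ hE')).2
  rwa [hsel] at hmem

lemma prioritySelector_isLeast {v : V} {t : ℕ} (hv : burnTime (prioritySelector E m) v = t)
    (hE : ¬∃ x ∈ unburnt (prioritySelector E m) t, E (unburnt (prioritySelector E m) t) x)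
    (hA : ∃ x ∈ unburnt (prioritySelector E m) t, m ≤ x) :
    IsLeast {x ∈ unburnt (prioritySelector E m) t | m ≤ x} v := by
  subst hv
  set U := unburnt (prioritySelector E m) (burnTime (prioritySelector E m) v)
  have hE' : ¬{x ∈ U | E U x}.Nonempty := by
    simpa [Finset.Nonempty] using hE
  have hA' : {x ∈ U | m ≤ x}.Nonempty := by
    simpa [Finset.Nonempty] using hA
  have hsel := sel_unburnt_burnTime (prioritySelector E m) v
  rw [prioritySelector_of_empty (unburnt_burnTime_nonempty _ v) hE' hA'] at hsel
  have hleast := isLeast_min' _ hA'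
  rwa [hsel, coe_filter] at hleast

lemma unburnt_prioritySelector_congr
    (h : ∀ t, ∀ v ∈ unburnt (prioritySelector E m) t,
      E (unburnt (prioritySelector E m) t) v ↔ E' (unburnt (prioritySelector E m) t) v) :
    unburnt (prioritySelector E m) = unburnt (prioritySelector E' m) := by
  refine unburnt_eq_of_agree _ fun t ht => ?_
  have hfilter : {x ∈ unburnt (prioritySelector E m) t | E (unburnt (prioritySelector E m) t) x} =
      {x ∈ unburnt (prioritySelector E m) t | E' (unburnt (prioritySelector E m) t) x} :=
    filter_congr (h t)
  simp only [prioritySelector, hfilter]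

end Priority

open SimpleGraph

section Forest

variable {V : Type*} [Fintype V] [LinearOrder V]

variable (m : V) (F : Finset (Sym2 V)) in
noncomputable def forestSelector : Selector V :=
  prioritySelector (fun U x => ∃ j ∉ U, s(x, j) ∈ F) m

variable {m : V} {F : Finset (Sym2 V)}

lemma isRoot_forest_iff (v : V) :
    (fromEdgeSet ↑F).IsRoot (burnTime (forestSelector m F)) v ↔
      ¬∃ x ∈ unburnt (forestSelector m F) (burnTime (forestSelector m F) v),
        ∃ j ∉ unburnt (forestSelector m F) (burnTime (forestSelector m F) v), s(x, j) ∈ F := by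
  have hv := mem_unburnt_burnTime (forestSelector m F) v
  constructor
  · intro hroot hE
    obtain ⟨j, hj, hvj⟩ := prioritySelector_eligible rfl hE
    rw [notMem_unburnt_iff] at hj
    exact hroot ⟨j, (fromEdgeSet_adj _).2 ⟨hvj, fun h => by subst h; omega⟩, hj⟩
  · rintro hE ⟨j, hadj, hj⟩
    rw [fromEdgeSet_adj] at hadj
    exact hE ⟨v, hv, j, (notMem_unburnt_iff _).2 hj, hadj.1⟩

lemma mem_unburnt_of_adj {t : ℕ}
    (hE : ¬∃ x ∈ unburnt (forestSelector m F) t, ∃ j ∉ unburnt (forestSelector m F) t, s(x, j) ∈ F)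
    {x y : V} (hadj : (fromEdgeSet ↑F).Adj x y) (hx : x ∈ unburnt (forestSelector m F) t) :
    y ∈ unburnt (forestSelector m F) t := by
  by_contra hy
  exact hE ⟨x, hx, y, hy, ((fromEdgeSet_adj _).1 hadj).1⟩

lemma notMem_unburnt_of_adj {t : ℕ}
    (hE : ¬∃ x ∈ unburnt (forestSelector m F) t, ∃ j ∉ unburnt (forestSelector m F) t, s(x, j) ∈ F)
    {x y : V} (hadj : (fromEdgeSet ↑F).Adj x y) (hx : x ∉ unburnt (forestSelector m F) t) :
    y ∉ unburnt (forestSelector m F) t :=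
  fun hy => hx (mem_unburnt_of_adj hE hadj.symm hy)

lemma forest_roots_eq_of_reachable {r₁ r₂ : V}
    (h₁ : (fromEdgeSet ↑F).IsRoot (burnTime (forestSelector m F)) r₁)
    (h₂ : (fromEdgeSet ↑F).IsRoot (burnTime (forestSelector m F)) r₂)
    (hr : (fromEdgeSet ↑F).Reachable r₁ r₂) : r₁ = r₂ := by
  -- when a root `b` is burnt, the burnt vertices are closed under adjacency
  have key : ∀ a b, (fromEdgeSet ↑F).IsRoot (burnTime (forestSelector m F)) b →
      (fromEdgeSet ↑F).Reachable a b →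
        burnTime (forestSelector m F) b ≤ burnTime (forestSelector m F) a :=
    fun a b hb hab => not_lt.1 fun hlt =>
      hab.mem_of_adj_closed (s := {x | x ∉ unburnt _ (burnTime _ b)})
        (fun _ _ hxy hx => notMem_unburnt_of_adj ((isRoot_forest_iff b).1 hb) hxy hx)
        ((notMem_unburnt_iff _).2 hlt) (mem_unburnt_burnTime _ b)
  exact burnTime_injective _ (le_antisymm (key _ _ h₁ hr.symm) (key _ _ h₂ hr))

lemma card_connectedComponent_forest :
    Nat.card (fromEdgeSet (F : Set (Sym2 V))).ConnectedComponent =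
      #{v | (fromEdgeSet ↑F).IsRoot (burnTime (forestSelector m F)) v} :=
  card_connectedComponent_eq_card_isRoot _ _ fun _ _ => forest_roots_eq_of_reachable

lemma isLeast_of_isRoot_forest (hreach : ∀ v, ∃ w, (fromEdgeSet ↑F).Reachable v w ∧ m ≤ w) {v : V}
    (hv : (fromEdgeSet ↑F).IsRoot (burnTime (forestSelector m F)) v) :
    IsLeast {x ∈ unburnt (forestSelector m F) (burnTime (forestSelector m F) v) | m ≤ x} v := by
  have hE := (isRoot_forest_iff v).1 hv
  obtain ⟨w, hvw, hw⟩ := hreach v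
  exact prioritySelector_isLeast rfl hE ⟨w, hvw.mem_of_adj_closed
    (fun _ _ hxy hx => mem_unburnt_of_adj hE hxy hx) (mem_unburnt_burnTime _ v), hw⟩

lemma forest_parent_eq (hF : (fromEdgeSet (F : Set (Sym2 V))).IsAcyclic) {v j : V}
    (hadj : (fromEdgeSet ↑F).Adj v j)
    (hj : burnTime (forestSelector m F) j < burnTime (forestSelector m F) v) :
    (fromEdgeSet ↑F).parent (burnTime (forestSelector m F)) v = j :=
  have hv := not_isRoot_of_adj hadj hj
  lower_subsingleton_of_isAcyclic hF (fun _ _ => forest_roots_eq_of_reachable)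
    (adj_parent hv) hadj (parent_lt hv) hj

lemma forestEligible_iff (hF : (fromEdgeSet (F : Set (Sym2 V))).IsAcyclic) {t : ℕ} {v : V}
    (hv : v ∈ unburnt (forestSelector m F) t) :
    (∃ j ∉ unburnt (forestSelector m F) t, s(v, j) ∈ F) ↔
      ¬(fromEdgeSet ↑F).IsRoot (burnTime (forestSelector m F)) v ∧
        burnTime (forestSelector m F)
          ((fromEdgeSet ↑F).parent (burnTime (forestSelector m F)) v) < t := by
  rw [mem_unburnt_iff] at hv
  constructor
  · rintro ⟨j, hj, hvj⟩
    rw [notMem_unburnt_iff] at hj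
    have hadj : (fromEdgeSet ↑F).Adj v j :=
      (fromEdgeSet_adj _).2 ⟨hvj, fun h => by subst h; omega⟩
    rw [forest_parent_eq hF hadj (by omega)]
    exact ⟨not_isRoot_of_adj hadj (by omega), hj⟩
  · rintro ⟨hroot, hlt⟩
    exact ⟨_, (notMem_unburnt_iff _).2 hlt, ((fromEdgeSet_adj _).1 (adj_parent hroot)).1⟩

lemma image_parentEdge_forest (hF : (fromEdgeSet (F : Set (Sym2 V))).IsAcyclic)
    (hdiag : ∀ e ∈ F, ¬e.IsDiag) :
    ({v | ¬(fromEdgeSet ↑F).IsRoot (burnTime (forestSelector m F)) v} : Finset V).image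
      (fun v => s(v, (fromEdgeSet ↑F).parent (burnTime (forestSelector m F)) v)) = F := by
  ext e
  simp only [mem_image, mem_filter, mem_univ, true_and]
  constructor
  · rintro ⟨v, hv, rfl⟩
    exact ((fromEdgeSet_adj _).1 (adj_parent hv)).1
  · intro he
    induction e using Sym2.ind with
    | _ a b =>
    have hadj : (fromEdgeSet ↑F).Adj a b :=
      (fromEdgeSet_adj _).2 ⟨he, fun h => hdiag _ he (by simp [h])⟩
    rcases lt_or_gt_of_ne (fun h => hadj.ne (burnTime_injective _ h)) with hlt | hlt
    · refine ⟨b, not_isRoot_of_adj hadj.symm hlt, ?_⟩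
      rw [forest_parent_eq hF hadj.symm hlt, Sym2.eq_swap]
    · exact ⟨a, not_isRoot_of_adj hadj hlt, by rw [forest_parent_eq hF hadj hlt]⟩

end Forest

end Burning

namespace Multiparking

open Burning SimpleGraph

variable {n : ℕ} (μ : Fin n → Fin n → ℕ) (m : Fin n)

/-- The disjunction of conditions (A) and (B) in the definition of a multiparking function,
for the set `U` and the witness `x`. -/
def Burnable (f : Fin n → ℤ) (U : Finset (Fin n)) (x : Fin n) : Prop :=
  (m ≤ x ∧ (∀ b ∈ U, m ≤ b → x ≤ b) ∧ f x = -1) ∨ (0 ≤ f x ∧ f x < outdeg μ U x)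

noncomputable def parkingSelector (f : Fin n → ℤ) : Selector (Fin n) :=
  prioritySelector (fun U x => 0 ≤ f x ∧ f x < outdeg μ U x) m

def InSlot (sel : Selector (Fin n)) (v j : Fin n) (c : ℤ) : Prop :=
  c ∈ Set.Ico (outdeg μ (unburnt sel (burnTime sel j)) v : ℤ)
    (outdeg μ (unburnt sel (burnTime sel j)) v + μ v j)

variable {μ m}

lemma outdeg_anti {I U : Finset (Fin n)} (h : I ⊆ U) (x : Fin n) :
    outdeg μ U x ≤ outdeg μ I x :=
  sum_le_sum_of_subset (compl_subset_compl.2 h)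

lemma Burnable.anti {f : Fin n → ℤ} {I U : Finset (Fin n)} {x : Fin n} (h : I ⊆ U)
    (hx : Burnable μ m f U x) : Burnable μ m f I x := by
  rcases hx with ⟨hm, hmin, hf⟩ | ⟨hf, hlt⟩
  · exact Or.inl ⟨hm, fun b hb => hmin b (h hb), hf⟩
  · exact Or.inr ⟨hf, hlt.trans_le (by exact_mod_cast outdeg_anti h x)⟩

lemma isMultiparking_of_burnable {f : Fin n → ℤ} (sel : Selector (Fin n)) (hlb : ∀ i, -1 ≤ f i)
    (hburn : ∀ v, Burnable μ m f (unburnt sel (burnTime sel v)) v) : IsMultiparking μ m f := by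
  refine ⟨hlb, fun I hI => ?_⟩
  obtain ⟨v, hvI, hmin⟩ := I.exists_min_image (burnTime sel) hI
  rcases (hburn v).anti fun u hu => (mem_unburnt_iff sel).2 (hmin u hu) with h | h
  · exact Or.inl ⟨v, hvI, h⟩
  · exact Or.inr ⟨v, hvI, h⟩

section Slot

variable {sel : Selector (Fin n)} {v j : Fin n} {c : ℤ}

lemma existsUnique_inSlot (hc : 0 ≤ c) {T : ℕ} (hcT : c < outdeg μ (unburnt sel T) v) :
    ∃! j, InSlot μ sel v j c := by
  obtain ⟨j, hj, huniq⟩ := existsUnique_slot sel (μ v) (c := c.toNat) (T := T) (by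
    unfold outdeg at hcT; omega)
  refine ⟨j, ?_, fun j' hj' => huniq j' ?_⟩
  · simp only [InSlot, outdeg, Set.mem_Ico] at hj ⊢; omega
  · simp only [InSlot, outdeg, Set.mem_Ico] at hj' ⊢; omega

lemma InSlot.nonneg (hj : InSlot μ sel v j c) : 0 ≤ c :=
  le_trans (by positivity) hj.1

lemma outdeg_unburnt_mono {s t : ℕ} (hst : s ≤ t) :
    outdeg μ (unburnt sel s) v ≤ outdeg μ (unburnt sel t) v :=
  outdeg_anti (antitone_unburnt sel hst) v

lemma outdeg_unburnt_burnTime_succ :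
    outdeg μ (unburnt sel (burnTime sel j + 1)) v =
      outdeg μ (unburnt sel (burnTime sel j)) v + μ v j :=
  sum_compl_unburnt_burnTime_succ sel (μ v) j

lemma InSlot.unique {j' : Fin n} (hj : InSlot μ sel v j c) (hj' : InSlot μ sel v j' c) :
    j = j' := by
  have hcT : c < outdeg μ (unburnt sel (burnTime sel j + 1)) v := by
    rw [outdeg_unburnt_burnTime_succ]; push_cast; exact hj.2
  exact (existsUnique_inSlot hj.nonneg hcT).unique hj hj'

lemma InSlot.lt_outdeg_iff (hj : InSlot μ sel v j c) {t : ℕ} :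
    c < outdeg μ (unburnt sel t) v ↔ burnTime sel j < t := by
  have hsucc := outdeg_unburnt_burnTime_succ (μ := μ) (sel := sel) (v := v) (j := j)
  obtain ⟨h1, h2⟩ := hj
  constructor
  · intro hc
    by_contra! ht
    have := outdeg_unburnt_mono (μ := μ) (sel := sel) (v := v) ht
    omega
  · intro (ht : burnTime sel j + 1 ≤ t)
    have := outdeg_unburnt_mono (μ := μ) (sel := sel) (v := v) ht
    omega

lemma inSlot_congr {sel sel' : Selector (Fin n)} (h : unburnt sel = unburnt sel') :
    InSlot μ sel = InSlot μ sel' := by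
  funext v j c
  simp only [InSlot, burnTime_eq_of_unburnt_eq sel h, h]

lemma InSlot.pos (hj : InSlot μ sel v j c) : 0 < μ v j := by
  have := hj.1; have := hj.2; omega

end Slot

section ParkingToForest

variable (μ m) in
noncomputable def parkingParent (f : Fin n → ℤ) (v : Fin n) : Fin n :=
  if h : ∃ j, InSlot μ (parkingSelector μ m f) v j (f v) then h.choose else v

variable (μ m) in
noncomputable def parkingForest (f : Fin n → ℤ) : Finset (Sym2 (Fin n)) :=
  ({v | 0 ≤ f v} : Finset (Fin n)).image fun v => s(v, parkingParent μ m f v)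

variable (μ m) in
noncomputable def parkingSlot (f : Fin n → ℤ) (v : Fin n) : ℕ :=
  (f v - outdeg μ (unburnt (parkingSelector μ m f)
    (burnTime (parkingSelector μ m f) (parkingParent μ m f v))) v).toNat

variable {f : Fin n → ℤ} (hf : IsMultiparking μ m f)
include hf

lemma burnable_burnTime (v : Fin n) :
    Burnable μ m f (unburnt (parkingSelector μ m f) (burnTime (parkingSelector μ m f) v)) v := by
  set U := unburnt (parkingSelector μ m f) (burnTime (parkingSelector μ m f) v)
  by_cases hE : ∃ x ∈ U, 0 ≤ f x ∧ f x < outdeg μ U x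
  · exact Or.inr (prioritySelector_eligible rfl hE)
  rcases hf.2 _ (unburnt_burnTime_nonempty _ v) with ⟨a, haU, hma, hmin, hfa⟩ | ⟨i, hiU, hi⟩
  · have hleast := prioritySelector_isLeast rfl hE ⟨a, haU, hma⟩
    obtain rfl : v = a := le_antisymm (hleast.2 ⟨haU, hma⟩) (hmin v hleast.1.1 hleast.1.2)
    exact Or.inl ⟨hma, hmin, hfa⟩
  · exact absurd ⟨i, hiU, hi⟩ hE

lemma lt_outdeg_of_nonneg {v : Fin n} (hv : 0 ≤ f v) :
    f v < outdeg μ (unburnt (parkingSelector μ m f) (burnTime (parkingSelector μ m f) v)) v := by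
  rcases burnable_burnTime hf v with ⟨-, -, h⟩ | ⟨-, h⟩
  · omega
  · exact h

lemma inSlot_parkingParent {v : Fin n} (hv : 0 ≤ f v) :
    InSlot μ (parkingSelector μ m f) v (parkingParent μ m f v) (f v) := by
  have hex := (existsUnique_inSlot hv (lt_outdeg_of_nonneg hf hv)).exists
  rw [parkingParent, dif_pos hex]
  exact hex.choose_spec

lemma burnTime_parkingParent_lt {v : Fin n} (hv : 0 ≤ f v) :
    burnTime (parkingSelector μ m f) (parkingParent μ m f v) <
      burnTime (parkingSelector μ m f) v :=
  (inSlot_parkingParent hf hv).lt_outdeg_iff.1 (lt_outdeg_of_nonneg hf hv)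

lemma le_of_eq_neg_one {v : Fin n} (hv : f v = -1) : m ≤ v := by
  rcases burnable_burnTime hf v with ⟨h, -⟩ | ⟨h, -⟩
  · exact h
  · omega

lemma adj_parkingForest_iff {a b : Fin n} :
    (fromEdgeSet ↑(parkingForest μ m f)).Adj a b ↔
      (0 ≤ f a ∧ b = parkingParent μ m f a) ∨ (0 ≤ f b ∧ a = parkingParent μ m f b) := by
  have hne : ∀ {v}, 0 ≤ f v → v ≠ parkingParent μ m f v := fun hv h =>
    (burnTime_parkingParent_lt hf hv).ne (congrArg _ h).symm
  simp only [fromEdgeSet_adj, mem_coe, parkingForest, mem_image, mem_filter, mem_univ, true_and]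
  constructor
  · rintro ⟨⟨v, hv, he⟩, -⟩
    rcases Sym2.eq_iff.1 he with ⟨rfl, rfl⟩ | ⟨rfl, rfl⟩
    · exact Or.inl ⟨hv, rfl⟩
    · exact Or.inr ⟨hv, rfl⟩
  · rintro (⟨ha, rfl⟩ | ⟨hb, rfl⟩)
    · exact ⟨⟨a, ha, rfl⟩, hne ha⟩
    · exact ⟨⟨b, hb, Sym2.eq_swap⟩, (hne hb).symm⟩

lemma adj_parkingForest_lower_iff {a b : Fin n} :
    (fromEdgeSet ↑(parkingForest μ m f)).Adj a b ∧
        burnTime (parkingSelector μ m f) b < burnTime (parkingSelector μ m f) a ↔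
      0 ≤ f a ∧ b = parkingParent μ m f a := by
  rw [adj_parkingForest_iff hf]
  constructor
  · rintro ⟨h | ⟨hb, rfl⟩, hlt⟩
    · exact h
    · exact absurd (burnTime_parkingParent_lt hf hb) (not_lt.2 hlt.le)
  · rintro ⟨ha, rfl⟩
    exact ⟨Or.inl ⟨ha, rfl⟩, burnTime_parkingParent_lt hf ha⟩

lemma isRoot_parkingForest_iff {v : Fin n} :
    (fromEdgeSet ↑(parkingForest μ m f)).IsRoot (burnTime (parkingSelector μ m f)) v ↔
      f v = -1 := by
  have := hf.1 v
  constructor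
  · intro hroot
    by_contra hne
    exact hroot ⟨_, (adj_parkingForest_lower_iff hf).2 ⟨by omega, rfl⟩⟩
  · rintro hv ⟨w, hw⟩
    have := ((adj_parkingForest_lower_iff hf).1 hw).1
    omega

lemma parkingEligible_iff {t : ℕ} {v : Fin n} :
    (0 ≤ f v ∧ f v < outdeg μ (unburnt (parkingSelector μ m f) t) v) ↔
      0 ≤ f v ∧ burnTime (parkingSelector μ m f) (parkingParent μ m f v) < t :=
  and_congr_right fun hv => (inSlot_parkingParent hf hv).lt_outdeg_iff

lemma forestEligible_parkingForest_iff {t : ℕ} {v : Fin n}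
    (hv : v ∈ unburnt (parkingSelector μ m f) t) :
    (∃ j ∉ unburnt (parkingSelector μ m f) t, s(v, j) ∈ parkingForest μ m f) ↔
      0 ≤ f v ∧ burnTime (parkingSelector μ m f) (parkingParent μ m f v) < t := by
  rw [mem_unburnt_iff] at hv
  constructor
  · rintro ⟨j, hj, hvj⟩
    rw [notMem_unburnt_iff] at hj
    have hadj : (fromEdgeSet ↑(parkingForest μ m f)).Adj v j :=
      (fromEdgeSet_adj _).2 ⟨hvj, fun h => by subst h; omega⟩
    obtain ⟨hv0, rfl⟩ := (adj_parkingForest_lower_iff hf).1 ⟨hadj, by omega⟩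
    exact ⟨hv0, hj⟩
  · rintro ⟨hv0, hlt⟩
    have hadj := ((adj_parkingForest_lower_iff hf).2 ⟨hv0, rfl⟩).1
    exact ⟨_, (notMem_unburnt_iff _).2 hlt, ((fromEdgeSet_adj _).1 hadj).1⟩

lemma unburnt_forestSelector_parkingForest :
    unburnt (forestSelector m (parkingForest μ m f)) = unburnt (parkingSelector μ m f) :=
  (unburnt_prioritySelector_congr (E' := fun U x => ∃ j ∉ U, s(x, j) ∈ parkingForest μ m f)
    fun _ _ hv =>
    (parkingEligible_iff hf).trans (forestEligible_parkingForest_iff hf hv).symm).symm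

lemma burnTime_forestSelector_parkingForest :
    burnTime (forestSelector m (parkingForest μ m f)) = burnTime (parkingSelector μ m f) :=
  burnTime_eq_of_unburnt_eq _ (unburnt_forestSelector_parkingForest hf)

lemma parent_parkingForest {v : Fin n} (hv : 0 ≤ f v) :
    (fromEdgeSet ↑(parkingForest μ m f)).parent
      (burnTime (forestSelector m (parkingForest μ m f))) v = parkingParent μ m f v := by
  rw [burnTime_forestSelector_parkingForest hf]
  have hroot : ¬(fromEdgeSet ↑(parkingForest μ m f)).IsRoot
      (burnTime (parkingSelector μ m f)) v := by
    rw [isRoot_parkingForest_iff hf]; omega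
  exact ((adj_parkingForest_lower_iff hf).1 ⟨adj_parent hroot, parent_lt hroot⟩).2

lemma parkingForest_isSpanningMForest (hsym : ∀ i j, μ i j = μ j i) :
    IsSpanningMForest μ m (parkingForest μ m f) := by
  refine ⟨fun i j hij => ?_, ?_, fun v => ?_⟩
  · obtain ⟨v, hv, he⟩ := mem_image.1 hij
    rw [mem_filter] at hv
    have hpos := (inSlot_parkingParent hf hv.2).pos
    have hne : v ≠ parkingParent μ m f v := fun h =>
      (burnTime_parkingParent_lt hf hv.2).ne (congrArg _ h).symm
    rcases Sym2.eq_iff.1 he with ⟨rfl, rfl⟩ | ⟨rfl, rfl⟩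
    · exact ⟨hne, hpos⟩
    · exact ⟨hne.symm, hsym _ _ ▸ hpos⟩
  · exact isAcyclic_of_lower_subsingleton (burnTime_injective _) fun _ _ _ ha hb hav hbv =>
      ((adj_parkingForest_lower_iff hf).1 ⟨ha, hav⟩).2.trans
        ((adj_parkingForest_lower_iff hf).1 ⟨hb, hbv⟩).2.symm
  · obtain ⟨r, hr, p, -⟩ := exists_walk_isRoot (G := fromEdgeSet ↑(parkingForest μ m f))
      (h := burnTime (parkingSelector μ m f)) v
    exact ⟨r, ⟨p⟩, le_of_eq_neg_one hf ((isRoot_parkingForest_iff hf).1 hr)⟩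

lemma card_connectedComponent_parkingForest :
    Nat.card (fromEdgeSet (parkingForest μ m f : Set (Sym2 (Fin n)))).ConnectedComponent =
      #{v | f v = -1} := by
  rw [card_connectedComponent_forest (m := m), burnTime_forestSelector_parkingForest hf]
  simp only [isRoot_parkingForest_iff hf]

lemma outdeg_add_parkingSlot {v : Fin n} (hv : 0 ≤ f v) :
    (outdeg μ (unburnt (parkingSelector μ m f)
      (burnTime (parkingSelector μ m f) (parkingParent μ m f v))) v : ℤ) +
        parkingSlot μ m f v = f v := by
  have := (inSlot_parkingParent hf hv).1
  rw [parkingSlot]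
  omega

lemma parkingSlot_lt {v : Fin n} (hv : 0 ≤ f v) :
    parkingSlot μ m f v < μ v (parkingParent μ m f v) := by
  have := inSlot_parkingParent hf hv
  rw [parkingSlot]
  simp only [InSlot, Set.mem_Ico] at this
  omega

end ParkingToForest

section ForestToParking

variable (μ m) in
noncomputable def forestParking (F : Finset (Sym2 (Fin n))) (τ : Fin n → ℕ) (v : Fin n) : ℤ :=
  if (fromEdgeSet ↑F).IsRoot (burnTime (forestSelector m F)) v then -1
  else outdeg μ (unburnt (forestSelector m F) (burnTime (forestSelector m F)
    ((fromEdgeSet ↑F).parent (burnTime (forestSelector m F)) v))) v + τ v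

variable (μ m) in
noncomputable def slotCount (F : Finset (Sym2 (Fin n))) (v : Fin n) : ℕ :=
  if (fromEdgeSet ↑F).IsRoot (burnTime (forestSelector m F)) v then 1
  else μ v ((fromEdgeSet ↑F).parent (burnTime (forestSelector m F)) v)

variable (μ m) in
noncomputable def decorations (F : Finset (Sym2 (Fin n))) : Finset (Fin n → ℕ) :=
  Fintype.piFinset fun v => range (slotCount μ m F v)

variable {F : Finset (Sym2 (Fin n))} {τ : Fin n → ℕ}

lemma forestParking_eq_neg_one_iff {v : Fin n} :
    forestParking μ m F τ v = -1 ↔ (fromEdgeSet ↑F).IsRoot (burnTime (forestSelector m F)) v := by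
  unfold forestParking
  split_ifs with hv
  · simp [hv]
  · simp only [hv, iff_false]; omega

lemma forestParking_nonneg_iff {v : Fin n} :
    0 ≤ forestParking μ m F τ v ↔ ¬(fromEdgeSet ↑F).IsRoot (burnTime (forestSelector m F)) v := by
  unfold forestParking
  split_ifs with hv
  · simp [hv]
  · simp only [hv, not_false_eq_true, iff_true]; omega

lemma neg_one_le_forestParking (v : Fin n) : -1 ≤ forestParking μ m F τ v := by
  unfold forestParking
  split_ifs <;> omega

lemma forestParking_of_not_isRoot {v : Fin n}
    (hv : ¬(fromEdgeSet ↑F).IsRoot (burnTime (forestSelector m F)) v) :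
    forestParking μ m F τ v = outdeg μ (unburnt (forestSelector m F) (burnTime (forestSelector m F)
      ((fromEdgeSet ↑F).parent (burnTime (forestSelector m F)) v))) v + τ v :=
  if_neg hv

lemma card_roots_forestParking :
    #{v | forestParking μ m F τ v = -1} =
      Nat.card (fromEdgeSet (F : Set (Sym2 (Fin n)))).ConnectedComponent := by
  simp only [forestParking_eq_neg_one_iff, card_connectedComponent_forest (m := m)]

variable (hτ : τ ∈ decorations μ m F)
include hτ

lemma eq_zero_of_mem_decorations {v : Fin n}
    (hv : (fromEdgeSet ↑F).IsRoot (burnTime (forestSelector m F)) v) : τ v = 0 := by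
  have := Fintype.mem_piFinset.1 hτ v
  rw [slotCount, if_pos hv, mem_range] at this
  omega

lemma inSlot_forestParking {v : Fin n}
    (hv : ¬(fromEdgeSet ↑F).IsRoot (burnTime (forestSelector m F)) v) :
    InSlot μ (forestSelector m F) v ((fromEdgeSet ↑F).parent (burnTime (forestSelector m F)) v)
      (forestParking μ m F τ v) := by
  have := Fintype.mem_piFinset.1 hτ v
  rw [slotCount, if_neg hv, mem_range] at this
  rw [InSlot, forestParking, if_neg hv, Set.mem_Ico]
  omega

lemma parkingEligible_forestParking_iff {t : ℕ} {v : Fin n} :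
    (0 ≤ forestParking μ m F τ v ∧
        forestParking μ m F τ v < outdeg μ (unburnt (forestSelector m F) t) v) ↔
      ¬(fromEdgeSet ↑F).IsRoot (burnTime (forestSelector m F)) v ∧
        burnTime (forestSelector m F)
          ((fromEdgeSet ↑F).parent (burnTime (forestSelector m F)) v) < t := by
  rw [forestParking_nonneg_iff]
  exact and_congr_right fun hv => (inSlot_forestParking hτ hv).lt_outdeg_iff

variable (hF : IsSpanningMForest μ m F)
include hF

lemma forestParking_isMultiparking : IsMultiparking μ m (forestParking μ m F τ) := by
  refine isMultiparking_of_burnable (forestSelector m F) neg_one_le_forestParking fun v => ?_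
  by_cases hv : (fromEdgeSet ↑F).IsRoot (burnTime (forestSelector m F)) v
  · have hleast := isLeast_of_isRoot_forest hF.2.2 hv
    exact Or.inl ⟨hleast.1.2, fun b hb hmb => hleast.2 ⟨hb, hmb⟩,
      forestParking_eq_neg_one_iff.2 hv⟩
  · exact Or.inr ((parkingEligible_forestParking_iff hτ).2 ⟨hv, parent_lt hv⟩)

lemma unburnt_parkingSelector_forestParking :
    unburnt (parkingSelector μ m (forestParking μ m F τ)) = unburnt (forestSelector m F) :=
  (unburnt_prioritySelector_congr
    (E' := fun U x => 0 ≤ forestParking μ m F τ x ∧ forestParking μ m F τ x < outdeg μ U x)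
    fun _ _ hv => (forestEligible_iff hF.2.1 hv).trans
      (parkingEligible_forestParking_iff hτ).symm).symm

lemma parkingParent_forestParking {v : Fin n}
    (hv : ¬(fromEdgeSet ↑F).IsRoot (burnTime (forestSelector m F)) v) :
    parkingParent μ m (forestParking μ m F τ) v =
      (fromEdgeSet ↑F).parent (burnTime (forestSelector m F)) v := by
  have hslot := inSlot_parkingParent (forestParking_isMultiparking hτ hF)
    (forestParking_nonneg_iff.2 hv)
  rw [inSlot_congr (unburnt_parkingSelector_forestParking hτ hF)] at hslot
  exact hslot.unique (inSlot_forestParking hτ hv)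

end ForestToParking

lemma _root_.IsSpanningMForest.not_isDiag {F : Finset (Sym2 (Fin n))}
    (hF : IsSpanningMForest μ m F) : ∀ e ∈ F, ¬e.IsDiag := by
  intro e he
  induction e using Sym2.ind with
  | _ i j => exact fun h => (hF.1 i j he).1 (Sym2.mk_isDiag_iff.1 h)

lemma card_decorations (hsym : ∀ i j, μ i j = μ j i) {F : Finset (Sym2 (Fin n))}
    (hF : IsSpanningMForest μ m F) :
    #(decorations μ m F) = ∏ e ∈ F, Sym2.lift ⟨μ, hsym⟩ e := by
  rw [decorations, Fintype.card_piFinset]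
  calc ∏ v, #(range (slotCount μ m F v))
      = ∏ v ∈ {v | ¬(fromEdgeSet ↑F).IsRoot (burnTime (forestSelector m F)) v},
          Sym2.lift ⟨μ, hsym⟩ s(v, (fromEdgeSet ↑F).parent (burnTime (forestSelector m F)) v) := by
        simp only [card_range, slotCount, prod_filter, ite_not, Sym2.lift_mk]
    _ = ∏ e ∈ F, Sym2.lift ⟨μ, hsym⟩ e := by
        rw [← prod_image (by simpa using injOn_parentEdge),
          image_parentEdge_forest hF.2.1 hF.not_isDiag]

section ParkingRoundTrip

variable {f : Fin n → ℤ} (hf : IsMultiparking μ m f)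
include hf

lemma forestParking_parkingForest :
    forestParking μ m (parkingForest μ m f) (parkingSlot μ m f) = f := by
  funext v
  by_cases hv : f v = -1
  · rw [hv, forestParking_eq_neg_one_iff, burnTime_forestSelector_parkingForest hf,
      isRoot_parkingForest_iff hf]
    exact hv
  have h0 : 0 ≤ f v := by have := hf.1 v; omega
  rw [forestParking_of_not_isRoot (by rwa [burnTime_forestSelector_parkingForest hf,
      isRoot_parkingForest_iff hf]), parent_parkingForest hf h0,
    burnTime_forestSelector_parkingForest hf, unburnt_forestSelector_parkingForest hf]
  exact outdeg_add_parkingSlot hf h0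

lemma parkingSlot_mem_decorations : parkingSlot μ m f ∈ decorations μ m (parkingForest μ m f) := by
  refine Fintype.mem_piFinset.2 fun v => mem_range.2 ?_
  rw [slotCount]
  split_ifs with hv
  · rw [burnTime_forestSelector_parkingForest hf, isRoot_parkingForest_iff hf] at hv
    simp only [parkingSlot, hv]
    omega
  · have h0 : 0 ≤ f v := by
      rw [burnTime_forestSelector_parkingForest hf, isRoot_parkingForest_iff hf] at hv
      have := hf.1 v; omega
    rw [parent_parkingForest hf h0]
    exact parkingSlot_lt hf h0

end ParkingRoundTrip

section ForestRoundTrip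

variable {F : Finset (Sym2 (Fin n))} {τ : Fin n → ℕ} (hτ : τ ∈ decorations μ m F)
  (hF : IsSpanningMForest μ m F)
include hτ hF

lemma parkingForest_forestParking : parkingForest μ m (forestParking μ m F τ) = F := by
  calc parkingForest μ m (forestParking μ m F τ)
      = ({v | ¬(fromEdgeSet ↑F).IsRoot (burnTime (forestSelector m F)) v} : Finset (Fin n)).image
          fun v => s(v, (fromEdgeSet ↑F).parent (burnTime (forestSelector m F)) v) := by
        simp only [parkingForest, forestParking_nonneg_iff]
        exact image_congr fun v hv => by
          rw [parkingParent_forestParking hτ hF (by simpa using hv)]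
    _ = F := image_parentEdge_forest hF.2.1 hF.not_isDiag

lemma parkingSlot_forestParking : parkingSlot μ m (forestParking μ m F τ) = τ := by
  funext v
  by_cases hv : (fromEdgeSet ↑F).IsRoot (burnTime (forestSelector m F)) v
  · rw [eq_zero_of_mem_decorations hτ hv, parkingSlot, forestParking_eq_neg_one_iff.2 hv]
    omega
  · rw [parkingSlot, parkingParent_forestParking hτ hF hv,
      burnTime_eq_of_unburnt_eq _ (unburnt_parkingSelector_forestParking hτ hF),
      unburnt_parkingSelector_forestParking hτ hF, forestParking_of_not_isRoot hv]
    omega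

end ForestRoundTrip

lemma ncard_multiparking_eq_card_sigma (hsym : ∀ i j, μ i j = μ j i) (k : ℕ) :
    {f : Fin n → ℤ | IsMultiparking μ m f ∧ #{v | f v = -1} = k}.ncard =
      #(({F | IsSpanningMForest μ m F ∧
          Nat.card (fromEdgeSet (F : Set (Sym2 (Fin n)))).ConnectedComponent = k} :
        Finset (Finset (Sym2 (Fin n)))).sigma (decorations μ m)) := by
  rw [← Set.ncard_coe_finset]
  refine Set.ncard_congr (fun f _ => ⟨parkingForest μ m f, parkingSlot μ m f⟩) ?_ ?_ ?_
  · rintro f ⟨hf, hk⟩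
    exact mem_coe.2 <| mem_sigma.2 ⟨mem_filter.2 ⟨mem_univ _,
      parkingForest_isSpanningMForest hf hsym, (card_connectedComponent_parkingForest hf).trans hk⟩,
      parkingSlot_mem_decorations hf⟩
  · rintro f g ⟨hf, -⟩ ⟨hg, -⟩ h
    rw [← forestParking_parkingForest hf, ← forestParking_parkingForest hg]
    exact congrArg (fun p : Σ _ : Finset (Sym2 (Fin n)), Fin n → ℕ => forestParking μ m p.1 p.2) h
  · rintro ⟨F, τ⟩ hFτ
    obtain ⟨hFk, hτ⟩ := mem_sigma.1 (mem_coe.1 hFτ)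
    obtain ⟨-, hF, hk⟩ := mem_filter.1 hFk
    refine ⟨forestParking μ m F τ, ⟨forestParking_isMultiparking hτ hF,
      card_roots_forestParking.trans hk⟩, ?_⟩
    rw [parkingForest_forestParking hτ hF, parkingSlot_forestParking hτ hF]

end Multiparking

theorem multiparking_count_with_k_roots_general {n : ℕ} (μ : Fin n → Fin n → ℕ)
    (hsym : ∀ i j, μ i j = μ j i) (m : Fin n) (k : ℕ) :
    {f : Fin n → ℤ | IsMultiparking μ m f ∧
        (Finset.univ.filter (fun v => f v = -1)).card = k}.ncard =
      ∑ F ∈ Finset.univ.filter (fun F => IsSpanningMForest μ m F ∧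
          Nat.card (SimpleGraph.fromEdgeSet (F : Set (Sym2 (Fin n)))).ConnectedComponent = k),
        ∏ e ∈ F, Sym2.lift ⟨μ, hsym⟩ e := by
  rw [Multiparking.ncard_multiparking_eq_card_sigma hsym k, card_sigma]
  exact sum_congr rfl fun F hF => Multiparking.card_decorations hsym (mem_filter.1 hF).2.1

/-- The number of `(G,m)`-multiparking functions with exactly `k` roots equals the
weighted count `Σ_F Π_{{i,j} ∈ F} μ(i,j)` over spanning `m`-forests `F` of `G`
with exactly `k` connected components. -/
theorem multiparking_count_with_k_roots {n : ℕ} (μ : Fin n → Fin n → ℕ)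
    (hsym : ∀ i j, μ i j = μ j i) (hconn : (supportGraph μ).Connected) (m : Fin n)
    (k : ℕ) (hk : 1 ≤ k) :
    {f : Fin n → ℤ | IsMultiparking μ m f ∧
        (Finset.univ.filter (fun v => f v = -1)).card = k}.ncard =
      ∑ F ∈ Finset.univ.filter (fun F => IsSpanningMForest μ m F ∧
          Nat.card (SimpleGraph.fromEdgeSet (F : Set (Sym2 (Fin n)))).ConnectedComponent = k),
        ∏ e ∈ F, Sym2.lift ⟨μ, hsym⟩ e :=
  multiparking_count_with_k_roots_general μ hsym m k
end

section
/- Let G be a connected multigraph on vertex set [n] = {1,…,n}, let 1 ≤ m ≤ n, and let f : [n] → ℤ with f(i) ≥ −1 for all i. Define h_f : [n] → ℤ by h_f(i) = deg_G(i) − f(i). Then f is a (G,m)-multiparking function if and only if h_f takes values in ℕ and is a (G,m)-multiparking complement function. -/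
open scoped Classical

/-- In-degree of vertex `i` with respect to a vertex subset `I`:
the number of edges from `i` to vertices inside `I`. -/
def indeg {n : ℕ} (μ : Fin n → Fin n → ℕ) (I : Finset (Fin n)) (i : Fin n) : ℕ :=
  ∑ j ∈ I, μ i j

/-- The degree of vertex `i` in the multigraph `μ` (each loop at `i` counted once). -/
def degG {n : ℕ} (μ : Fin n → Fin n → ℕ) (i : Fin n) : ℕ :=
  ∑ j, μ i j

/-- A `(G,m)`-multiparking complement function: for every nonempty `I`, either
(Ā) `I` contains a vertex `≥ m` and `h(α(I,m)) = deg_G(α(I,m)) + 1`, or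
(B̄) there is `i ∈ I` with `indeg_I(i) < h(i) ≤ deg_G(i)`. -/
def IsMultiparkingComplement {n : ℕ} (μ : Fin n → Fin n → ℕ) (m : Fin n)
    (h : Fin n → ℤ) : Prop :=
  ∀ I : Finset (Fin n), I.Nonempty →
    (∃ a ∈ I, m ≤ a ∧ (∀ b ∈ I, m ≤ b → a ≤ b) ∧ h a = (degG μ a : ℤ) + 1) ∨
    (∃ i ∈ I, (indeg μ I i : ℤ) < h i ∧ h i ≤ (degG μ i : ℤ))

/-!
Substituting `h = deg_G - f` translates the two conditions into each other clause by clause: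
`f(a) = -1` becomes `h(a) = deg_G(a) + 1`, and, since `deg_G(i) = indeg_I(i) + outdeg_I(i)`,
`0 ≤ f(i) < outdeg_I(i)` becomes `indeg_I(i) < h(i) ≤ deg_G(i)`. The only further point is that
`h` is nonnegative, which follows by testing the multiparking condition on singletons.
-/

section

variable {n : ℕ} (μ : Fin n → Fin n → ℕ)

theorem degG_eq_indeg_add_outdeg (I : Finset (Fin n)) (i : Fin n) :
    degG μ i = indeg μ I i + outdeg μ I i :=
  (Finset.sum_add_sum_compl I (μ i)).symm

theorem isMultiparkingComplement_degG_sub_iff (m : Fin n) (f : Fin n → ℤ) :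
    IsMultiparkingComplement μ m (fun i => (degG μ i : ℤ) - f i) ↔
      ∀ I : Finset (Fin n), I.Nonempty →
        (∃ a ∈ I, m ≤ a ∧ (∀ b ∈ I, m ≤ b → a ≤ b) ∧ f a = -1) ∨
        (∃ i ∈ I, 0 ≤ f i ∧ f i < (outdeg μ I i : ℤ)) := by
  refine forall₂_congr fun I _ => or_congr ?_ ?_
  · refine exists_congr fun a => and_congr_right' <| and_congr_right' <| and_congr_right' ?_
    dsimp only
    omega
  · refine exists_congr fun i => and_congr_right' ?_
    have := degG_eq_indeg_add_outdeg μ I i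
    dsimp only
    omega

theorem IsMultiparking.le_degG {m : Fin n} {f : Fin n → ℤ} (hf : IsMultiparking μ m f)
    (i : Fin n) : f i ≤ degG μ i := by
  have := degG_eq_indeg_add_outdeg μ {i} i
  rcases hf.2 {i} (Finset.singleton_nonempty i) with ⟨a, ha, -, -, hfa⟩ | ⟨j, hj, -, hlt⟩
  · rw [Finset.mem_singleton.1 ha] at hfa
    omega
  · rw [Finset.mem_singleton.1 hj] at hlt
    omega

end

theorem multiparking_iff_complement_general {n : ℕ} (μ : Fin n → Fin n → ℕ)
    (m : Fin n)
    (f : Fin n → ℤ) (hf : ∀ i, -1 ≤ f i) :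
    IsMultiparking μ m f ↔
      ((∀ i, 0 ≤ (degG μ i : ℤ) - f i) ∧
        IsMultiparkingComplement μ m (fun i => (degG μ i : ℤ) - f i)) := by
  rw [isMultiparkingComplement_degG_sub_iff]
  constructor
  · intro hpark
    exact ⟨fun i => sub_nonneg.2 (hpark.le_degG μ i), hpark.2⟩
  · rintro ⟨-, hcond⟩
    exact ⟨hf, hcond⟩

/-- `f` is a `(G,m)`-multiparking function iff `h_f(i) = deg_G(i) - f(i)` takes values
in `ℕ` and is a `(G,m)`-multiparking complement function. -/
theorem multiparking_iff_complement {n : ℕ} (μ : Fin n → Fin n → ℕ)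
    (hsym : ∀ i j, μ i j = μ j i) (m : Fin n)
    (hconn : (supportGraph μ).Connected)
    (f : Fin n → ℤ) (hf : ∀ i, -1 ≤ f i) :
    IsMultiparking μ m f ↔
      ((∀ i, 0 ≤ (degG μ i : ℤ) - f i) ∧
        IsMultiparkingComplement μ m (fun i => (degG μ i : ℤ) - f i)) :=
  multiparking_iff_complement_general μ m f hf
end
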